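/- For every integer m ≥ 0, π/5 = √5 · ∑_{n=0}^∞ ((−1)^n/(2n+1)) · F_{(2m+1)(2n+1)} · (2√(5 − 2√5) / (√5·F_{2m+1} + √(5·F_{2m+1}² + 4(5 − 2√5))))^{2n+1}, where the series on the right converges. -/

import Mathlib

open Real

set_option maxHeartbeats 1600000 in
theorem pi_div_five_fib_series (m : ℕ) :
    Summable
      (fun n : ℕ => (-1 : ℝ) ^ n / (2 * (n : ℝ) + 1) *
        (Nat.fib ((2 * m + 1) * (2 * n + 1)) : ℝ) *
        (2 * Real.sqrt (5 - 2 * Real.sqrt 5) /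
          (Real.sqrt 5 * (Nat.fib (2 * m + 1) : ℝ) +
            Real.sqrt (5 * (Nat.fib (2 * m + 1) : ℝ) ^ 2 +
              4 * (5 - 2 * Real.sqrt 5)))) ^ (2 * n + 1)) ∧
    Real.pi / 5 = Real.sqrt 5 *
      ∑' n : ℕ, (-1 : ℝ) ^ n / (2 * (n : ℝ) + 1) *
        (Nat.fib ((2 * m + 1) * (2 * n + 1)) : ℝ) *
        (2 * Real.sqrt (5 - 2 * Real.sqrt 5) /
          (Real.sqrt 5 * (Nat.fib (2 * m + 1) : ℝ) +
            Real.sqrt (5 * (Nat.fib (2 * m + 1) : ℝ) ^ 2 +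
              4 * (5 - 2 * Real.sqrt 5)))) ^ (2 * n + 1) := by
  have h5 : (0:ℝ) < √5 := Real.sqrt_pos.2 (by norm_num)
  have h5sq : (√5:ℝ)^2 = 5 := Real.sq_sqrt (by norm_num)
  have h2lt : (2:ℝ) < √5 := by nlinarith [h5sq, h5]
  have h5lt : (√5 : ℝ) < 5/2 := by nlinarith [h5sq, h5]
  set c : ℝ := Real.sqrt (5 - 2*Real.sqrt 5) with hc_def
  have hcpos : 0 < c := Real.sqrt_pos.2 (by linarith)
  have hcsq : c^2 = 5 - 2*√5 := Real.sq_sqrt (by linarith)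
  have hclt : c < 1 := by nlinarith [hcsq, hcpos, h2lt]
  set k := 2*m+1 with hk
  set F : ℝ := (Nat.fib k : ℝ) with hF
  have hF1 : 1 ≤ F := by
    have h : 1 ≤ Nat.fib k := Nat.fib_pos.2 (by omega)
    rw [hF]; exact_mod_cast h
  set a : ℝ := goldenRatio ^ k with ha_def
  have hgold : (1:ℝ) < goldenRatio := one_lt_goldenRatio
  have ha1 : 1 < a := one_lt_pow₀ hgold (by omega)
  have hapos : 0 < a := by linarith
  set b : ℝ := a⁻¹ with hb_def
  have hbpos : 0 < b := inv_pos.2 hapos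
  have hab : a * b = 1 := mul_inv_cancel₀ (ne_of_gt hapos)
  have hb1 : b < 1 := by rw [hb_def]; exact inv_lt_one_of_one_lt₀ ha1
  have hψ : goldenConj = -goldenRatio⁻¹ := by rw [inv_goldenRatio]; ring
  -- fib identity for odd indices
  have hfib2 : ∀ n : ℕ, √5 * (Nat.fib (k*(2*n+1)) : ℝ) = a^(2*n+1) + b^(2*n+1) := by
    intro n
    have hodd : Odd (k*(2*n+1)) := (Nat.odd_mul).2 ⟨⟨m, by omega⟩, ⟨n, by omega⟩⟩
    rw [Real.coe_fib_eq, hψ, hodd.neg_pow]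
    rw [ha_def, hb_def, ← pow_mul, ← inv_pow, ← pow_mul]
    field_simp
    ring
  have hfib1 : √5 * F = a + b := by
    have := hfib2 0
    simpa using this
  clear_value a b c F
  set D : ℝ := Real.sqrt (5 * F^2 + 4*(5 - 2*Real.sqrt 5)) with hD_def
  have hDsq : D^2 = 5*F^2 + 4*c^2 := by
    rw [hD_def, hcsq, Real.sq_sqrt (by nlinarith)]
  have hDpos : 0 < D := Real.sqrt_pos.2 (by nlinarith)
  have hS : 0 < √5 * F + D := by positivity
  clear_value D
  set x : ℝ := 2*c/(√5*F + D) with hx_def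
  have hxpos : 0 < x := by positivity
  have hkey : (a + b)*x = c*(1 - x^2) := by
    rw [← hfib1, hx_def]
    field_simp
    linear_combination F^2 * h5sq - hDsq
  clear_value x
  have hx1 : x < 1 := by nlinarith [hkey, mul_pos (by linarith : (0:ℝ) < a+b) hxpos, hcpos, hxpos]
  have hxb : x < b := by
    have hq : c*x^2 + (a+b)*x - c = 0 := by linear_combination hkey
    have hg : 0 < c*b^2 + (a+b)*b - c := by nlinarith [mul_pos hbpos hbpos, hab, hclt, hcpos]
    have hfac : 0 < (b - x)*(c*(b+x) + (a+b)) := by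
      have h' : (b - x)*(c*(b+x) + (a+b))
          = (c*b^2+(a+b)*b - c) - (c*x^2+(a+b)*x - c) := by ring
      rw [h', hq]; linarith
    have hpos2 : 0 < c*(b+x) + (a+b) := by
      have := mul_pos hcpos (add_pos hbpos hxpos); linarith
    nlinarith [hfac, hpos2]
  have hax1 : a*x < 1 := by
    calc a*x < a*b := by exact (mul_lt_mul_iff_right₀ hapos).2 hxb
    _ = 1 := hab
  have hbx1 : b*x < 1 := by nlinarith
  have h1 := Real.hasSum_arctan (x := a*x)
    (by rw [Real.norm_eq_abs, abs_of_pos (mul_pos hapos hxpos)]; exact hax1)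
  have h2 := Real.hasSum_arctan (x := b*x)
    (by rw [Real.norm_eq_abs, abs_of_pos (mul_pos hbpos hxpos)]; exact hbx1)
  have hsum := h1.add h2
  have heq : (fun n : ℕ => (-1:ℝ) ^ n * (a*x) ^ (2 * n + 1) / ↑(2 * n + 1)
        + (-1:ℝ) ^ n * (b*x) ^ (2 * n + 1) / ↑(2 * n + 1))
      = (fun n : ℕ => √5 * ((-1 : ℝ) ^ n / (2 * (n : ℝ) + 1) *
        (Nat.fib (k * (2 * n + 1)) : ℝ) * x ^ (2 * n + 1))) := by
    funext n
    have hf := hfib2 n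
    have hn : ((2*n+1 : ℕ) : ℝ) = 2*(n:ℝ)+1 := by push_cast; ring
    rw [hn, mul_pow, mul_pow]
    have hne : (2*(n:ℝ)+1) ≠ 0 := by positivity
    linear_combination (-((-1:ℝ)^n * x^(2*n+1)/(2*(n:ℝ)+1))) * hf
  rw [heq] at hsum
  have hsum2 := hsum.mul_left (√5)⁻¹
  simp only [← mul_assoc, inv_mul_cancel₀ (ne_of_gt h5), one_mul] at hsum2
  refine ⟨hsum2.summable, ?_⟩
  rw [hsum2.tsum_eq, ← mul_assoc, mul_inv_cancel₀ (ne_of_gt h5), one_mul]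
  -- now show π/5 = arctan (a*x) + arctan (b*x)
  have habx : a*x*(b*x) < 1 := by nlinarith [hab, hxpos, hx1]
  rw [Real.arctan_add habx]
  have hdiv : (a*x + b*x)/(1 - a*x*(b*x)) = c := by
    have h1x : (1:ℝ) - a*x*(b*x) ≠ 0 := by nlinarith
    rw [div_eq_iff h1x]
    linear_combination hkey + (c*x^2)*hab
  rw [hdiv]
  have hcos := Real.cos_pi_div_five
  have hcospos : 0 < Real.cos (π/5) := by rw [hcos]; positivity
  have hsinpos : 0 < Real.sin (π/5) := Real.sin_pos_of_pos_of_lt_pi (by positivity)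
    (by linarith [pi_pos])
  have htanpos : 0 < Real.tan (π/5) := by
    rw [Real.tan_eq_sin_div_cos]; positivity
  have htansq : Real.tan (π/5)^2 = 5 - 2*√5 := by
    have hsin : Real.sin (π/5)^2 = 1 - ((1+√5)/4)^2 := by
      rw [← hcos, Real.sin_sq]
    rw [Real.tan_eq_sin_div_cos, div_pow, hsin, hcos, div_eq_iff (by positivity)]
    nlinarith [h5sq]
  have hceq : c = Real.tan (π/5) := by
    rw [hc_def, ← htansq, Real.sqrt_sq htanpos.le]
  rw [hceq, Real.arctan_tan (by linarith [pi_pos]) (by linarith [pi_pos])]
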